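/- For every t ≤ 0 and every w ∈ W, ∫_{−∞}^{t} e^{yD*}((D + D*)(e^{(y−t)D} w)) dy = e^{tD*} w. (This is the compression relation Φ* ∘ S_t ∘ Φ = e^{tD*} for negative times for the right-translation group S_t f = f(· − t) on L²(ℝ; W) and the map Φ of the explicit dilation.) -/

import Mathlib

open MeasureTheory RealInnerProductSpace

/-!
Put `F y = e^{yD*} e^{(y-t)D} w`. Then `F' y = e^{yD*} (D + D*) e^{(y-t)D} w` and
`F t = e^{tD*} w`, so the integral is `F t - lim_{y → -∞} F y`. Since `W` is finite-dimensional,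
positivity of `⟪(D + D*) v, v⟫ = 2 ⟪D v, v⟫ = 2 ⟪D* v, v⟫` on the unit sphere gives `c > 0` with
`⟪D v, v⟫, ⟪D* v, v⟫ ≥ c ‖v‖²`. Then `e^{-2cs} ‖e^{sD} v‖²` is nondecreasing in `s`, so both
semigroups decay like `e^{cs}` as `s → -∞`; hence `F'` is integrable on `(-∞, t]` and `F → 0`.
-/

open ContinuousLinearMap Filter Set Topology

section Coercive

variable {W : Type*} [NormedAddCommGroup W] [InnerProductSpace ℝ W]

lemma real_inner_adjoint_apply_self [CompleteSpace W] (T : W →L[ℝ] W) (v : W) :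
    ⟪adjoint T v, v⟫ = ⟪T v, v⟫ := by
  rw [adjoint_inner_left, real_inner_comm]

lemma exists_pos_mul_norm_sq_le_inner_self [FiniteDimensional ℝ W] (T : W →L[ℝ] W)
    (hT : ∀ w : W, w ≠ 0 → 0 < ⟪T w, w⟫) :
    ∃ c > 0, ∀ w : W, c * ‖w‖ ^ 2 ≤ ⟪T w, w⟫ := by
  rcases subsingleton_or_nontrivial W with hW | hW
  · exact ⟨1, one_pos, fun w => by simp [Subsingleton.elim w 0]⟩
  have hcont : Continuous fun w : W => ⟪T w, w⟫ := by fun_prop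
  obtain ⟨z, hz, hmin⟩ := (isCompact_sphere (0 : W) 1).exists_isMinOn
    (NormedSpace.sphere_nonempty.2 zero_le_one) hcont.continuousOn
  have hz1 : ‖z‖ = 1 := by simpa using hz
  refine ⟨⟪T z, z⟫, hT z (norm_ne_zero_iff.1 (by simp [hz1])), fun w => ?_⟩
  rcases eq_or_ne w 0 with rfl | hw
  · simp
  have hw' : 0 < ‖w‖ := norm_pos_iff.2 hw
  have hunit : ‖w‖⁻¹ • w ∈ Metric.sphere (0 : W) 1 := by
    simp [norm_smul, hw'.ne']
  have hscale : ⟪T (‖w‖⁻¹ • w), ‖w‖⁻¹ • w⟫ = ⟪T w, w⟫ / ‖w‖ ^ 2 := by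
    rw [map_smul, real_inner_smul_left, real_inner_smul_right]
    field_simp
  have hzw : ⟪T z, z⟫ ≤ ⟪T w, w⟫ / ‖w‖ ^ 2 := hscale ▸ hmin hunit
  rwa [le_div_iff₀ (by positivity)] at hzw

end Coercive

section Semigroup

variable {W : Type*} [NormedAddCommGroup W] [InnerProductSpace ℝ W] [CompleteSpace W]

open NormedSpace

lemma hasDerivAt_exp_smul_apply (A : W →L[ℝ] W) (v : W) (s : ℝ) :
    HasDerivAt (fun s : ℝ => exp (s • A) v) (A (exp (s • A) v)) s := by
  simpa using (hasDerivAt_exp_smul_const' A s).clm_apply (hasDerivAt_const s v)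

lemma norm_exp_smul_apply_le {A : W →L[ℝ] W} {a : ℝ}
    (hA : ∀ v : W, a * ‖v‖ ^ 2 ≤ ⟪A v, v⟫) (v : W) {s : ℝ} (hs : s ≤ 0) :
    ‖exp (s • A) v‖ ≤ Real.exp (a * s) * ‖v‖ := by
  set u : ℝ → W := fun s => exp (s • A) v
  have hderiv : ∀ s, HasDerivAt (fun s => Real.exp (-(2 * a * s)) * ‖u s‖ ^ 2)
      (Real.exp (-(2 * a * s)) * (2 * (⟪A (u s), u s⟫ - a * ‖u s‖ ^ 2))) s := fun s => by
    refine ((((hasDerivAt_id s).const_mul (2 * a)).neg.exp).mul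
      (hasDerivAt_exp_smul_apply A v s).norm_sq).congr_deriv ?_
    rw [real_inner_comm]
    simp only [id, Pi.neg_apply, u]
    ring
  have hmono := monotone_of_hasDerivAt_nonneg hderiv fun s =>
    mul_nonneg (Real.exp_pos _).le (by linarith [hA (u s)])
  have hsq : ‖u s‖ ^ 2 ≤ (Real.exp (a * s) * ‖v‖) ^ 2 := by
    have h : Real.exp (-(2 * a * s)) * ‖u s‖ ^ 2 ≤ ‖v‖ ^ 2 := by
      simpa only [u, mul_zero, neg_zero, Real.exp_zero, zero_smul, exp_zero,
        one_apply_eq_self, one_mul] using hmono hs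
    calc ‖u s‖ ^ 2 = Real.exp (2 * a * s) * (Real.exp (-(2 * a * s)) * ‖u s‖ ^ 2) := by
          rw [← mul_assoc, ← Real.exp_add]; simp
      _ ≤ Real.exp (2 * a * s) * ‖v‖ ^ 2 := by gcongr
      _ = (Real.exp (a * s) * ‖v‖) ^ 2 := by
          rw [mul_pow, sq (Real.exp _), ← Real.exp_add]; ring_nf
  exact (pow_le_pow_iff_left₀ (norm_nonneg _) (by positivity) two_ne_zero).1 hsq

lemma hasDerivAt_exp_smul_apply_exp_smul (A B : W →L[ℝ] W) (t : ℝ) (w : W) (y : ℝ) :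
    HasDerivAt (fun y : ℝ => exp (y • B) (exp ((y - t) • A) w))
      (exp (y • B) ((A + B) (exp ((y - t) • A) w))) y := by
  have hA : HasDerivAt (fun y : ℝ => exp ((y - t) • A) w) (A (exp ((y - t) • A) w)) y :=
    (hasDerivAt_exp_smul_apply A w (y - t)).comp_sub_const y t
  refine ((hasDerivAt_exp_smul_const B y).clm_apply hA).congr_deriv ?_
  rw [add_apply, map_add, mul_apply_eq_comp, add_comm]

variable {A B : W →L[ℝ] W} {a b : ℝ}

lemma norm_exp_smul_apply_exp_smul_le (hA : ∀ v : W, a * ‖v‖ ^ 2 ≤ ⟪A v, v⟫)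
    (hB : ∀ v : W, b * ‖v‖ ^ 2 ≤ ⟪B v, v⟫) (K : W →L[ℝ] W) (w : W) {t y : ℝ} (ht : t ≤ 0)
    (hy : y ≤ t) :
    ‖exp (y • B) (K (exp ((y - t) • A) w))‖ ≤
      ‖K‖ * ‖w‖ * Real.exp (-(a * t)) * Real.exp ((a + b) * y) :=
  calc ‖exp (y • B) (K (exp ((y - t) • A) w))‖
      ≤ Real.exp (b * y) * ‖K (exp ((y - t) • A) w)‖ :=
        norm_exp_smul_apply_le hB _ (hy.trans ht)
    _ ≤ Real.exp (b * y) * (‖K‖ * (Real.exp (a * (y - t)) * ‖w‖)) := by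
        gcongr
        exact K.le_opNorm_of_le (norm_exp_smul_apply_le hA w (by linarith))
    _ = ‖K‖ * ‖w‖ * Real.exp (-(a * t)) * Real.exp ((a + b) * y) := by
        have : Real.exp (b * y) * Real.exp (a * (y - t)) =
            Real.exp (-(a * t)) * Real.exp ((a + b) * y) := by
          rw [← Real.exp_add, ← Real.exp_add]; ring_nf
        linear_combination ‖K‖ * ‖w‖ * this

theorem integral_Iic_exp_smul_apply_add_apply_exp_smul
    (hA : ∀ v : W, a * ‖v‖ ^ 2 ≤ ⟪A v, v⟫) (hB : ∀ v : W, b * ‖v‖ ^ 2 ≤ ⟪B v, v⟫)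
    (hab : 0 < a + b) {t : ℝ} (ht : t ≤ 0) (w : W) :
    ∫ y in Iic t, exp (y • B) ((A + B) (exp ((y - t) • A) w)) = exp (t • B) w := by
  have hint : IntegrableOn (fun y => exp (y • B) ((A + B) (exp ((y - t) • A) w))) (Iic t) := by
    refine Integrable.mono'
      ((integrableOn_exp_mul_Iic hab t).const_mul (‖A + B‖ * ‖w‖ * Real.exp (-(a * t))))
      (Continuous.aestronglyMeasurable ?_) ?_
    · have hexp (C : W →L[ℝ] W) : Continuous fun s : ℝ => exp (s • C) :=
        (differentiable_exp_smul_const ℝ C).continuous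
      exact (hexp B).clm_apply ((A + B).continuous.comp
        (((hexp A).comp (continuous_sub_right t)).clm_apply continuous_const))
    filter_upwards [ae_restrict_mem measurableSet_Iic] with y hy
    exact norm_exp_smul_apply_exp_smul_le hA hB (A + B) w ht hy
  have hlim : Tendsto (fun y => exp (y • B) (exp ((y - t) • A) w)) atBot (𝓝 0) := by
    refine squeeze_zero_norm' ?_ (by simpa using
      ((Real.tendsto_exp_atBot.comp (tendsto_id.const_mul_atBot hab)).const_mul
        (‖(1 : W →L[ℝ] W)‖ * ‖w‖ * Real.exp (-(a * t)))))
    filter_upwards [Iic_mem_atBot t] with y hy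
    simpa using norm_exp_smul_apply_exp_smul_le hA hB 1 w ht hy
  rw [integral_Iic_of_hasDerivAt_of_tendsto'
    (fun y _ => hasDerivAt_exp_smul_apply_exp_smul A B t w y) hint hlim]
  simp

end Semigroup

/-- Let `W` be a finite-dimensional real inner product space and
`D : W → W` a linear map with adjoint `D*` such that `⟨(D + D*)w, w⟩ > 0` for every
nonzero `w`.  For every `t ≤ 0` and every `w ∈ W`,
`∫_{−∞}^{t} e^{yD*}((D + D*)(e^{(y−t)D} w)) dy = e^{tD*} w`
(the compression relation `Φ* ∘ S_t ∘ Φ = e^{tD*}` for negative times for the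
right-translation group on `L²(ℝ; W)`). -/
theorem compression_relation_nonpos_time
    {W : Type*} [NormedAddCommGroup W] [InnerProductSpace ℝ W] [FiniteDimensional ℝ W]
    (D : W →L[ℝ] W)
    (hpos : ∀ w : W, w ≠ 0 → 0 < ⟪(D + ContinuousLinearMap.adjoint D) w, w⟫) :
    ∀ t : ℝ, t ≤ 0 → ∀ w : W,
      ∫ y in Set.Iic t,
        NormedSpace.exp (y • ContinuousLinearMap.adjoint D)
          ((D + ContinuousLinearMap.adjoint D) (NormedSpace.exp ((y - t) • D) w))
        = NormedSpace.exp (t • ContinuousLinearMap.adjoint D) w := by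
  intro t ht w
  have hD : ∀ w : W, w ≠ 0 → 0 < ⟪D w, w⟫ := fun w hw => by
    have := hpos w hw
    rw [add_apply, inner_add_left, real_inner_adjoint_apply_self] at this
    linarith
  obtain ⟨c, hc, hcoerc⟩ := exists_pos_mul_norm_sq_le_inner_self D hD
  have hcoerc_adjoint : ∀ v : W, c * ‖v‖ ^ 2 ≤ ⟪adjoint D v, v⟫ := by
    simpa only [real_inner_adjoint_apply_self] using hcoerc
  exact integral_Iic_exp_smul_apply_add_apply_exp_smul hcoerc hcoerc_adjoint (by linarith) ht w
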